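/- arXiv:1203.6574 — 2 statements merged into one kernel-verified Lean document; each statement's English description precedes it below -/
import Mathlib

section
/- For a nonnegative random variable X and 0 < θ ≤ 1, if lim_{x→∞} P(X > x − ξ x^{1−θ})/P(X > x) = 1 for some ξ ∈ ℝ \\ {0}, then X^θ is long-tailed. -/
open MeasureTheory Filter Set ProbabilityTheory Real

/-- The tail probability `P(X > x)` as a real number. -/
noncomputable def tailP {Ω : Type*} [MeasurableSpace Ω] (μ : Measure Ω) (X : Ω → ℝ) (x : ℝ) : ℝ :=
  (μ {ω | x < X ω}).toReal

/-- A nonnegative random variable `X` is long-tailed if `P(X > x) > 0` for all `x ≥ 0` and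
`P(X > x + y) / P(X > x) → 1` as `x → ∞` for all `y > 0`. -/
def LongTailed {Ω : Type*} [MeasurableSpace Ω] (μ : Measure Ω) (X : Ω → ℝ) : Prop :=
  (∀ x ≥ 0, 0 < tailP μ X x) ∧
  ∀ y > 0, Tendsto (fun x => tailP μ X (x + y) / tailP μ X x) atTop (nhds 1)

/-!
Write `L` for the tail of `X` and `g x = x ^ (1 - θ)`. The hypothesis makes `L`
`a g`-insensitive, `L (x + a g x) ∼ L x`, with `a = |ξ|` (for `ξ > 0` substitute
`x ↦ x + ξ g x`, using that `g` is nondecreasing). Composing this relation with itself doubles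
`a`, so `L` is `c g`-insensitive for every `c ≥ 0`. Finally `P(X^θ > x) = L (x^{1/θ})`,
and convexity of `t ↦ t^{1/θ}` gives `(x + y)^{1/θ} ≤ x^{1/θ} + c (x^{1/θ})^{1-θ}`
for large `x`.
-/

open Topology

def IsInsensitive (L h : ℝ → ℝ) : Prop :=
  Tendsto (fun x => L (x + h x) / L x) atTop (𝓝 1)

section Insensitive

variable {L : ℝ → ℝ}

lemma tendsto_div_of_le_of_le {α : Type*} {l : Filter α} {a b c : α → ℝ}
    (hL : Antitone L) (hL0 : ∀ x, 0 ≤ L x) (hab : ∀ᶠ x in l, a x ≤ b x)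
    (hbc : ∀ᶠ x in l, b x ≤ c x) (h : Tendsto (fun x => L (c x) / L (a x)) l (𝓝 1)) :
    Tendsto (fun x => L (b x) / L (a x)) l (𝓝 1) := by
  refine tendsto_of_tendsto_of_tendsto_of_le_of_le' h tendsto_const_nhds ?_ ?_
  · filter_upwards [hbc] with x hx
    exact div_le_div_of_nonneg_right (hL hx) (hL0 _)
  · filter_upwards [hab] with x hx
    exact div_le_one_of_le₀ (hL hx) (hL0 _)

lemma IsInsensitive.mono {h₁ h₂ : ℝ → ℝ} (hL : Antitone L) (hL0 : ∀ x, 0 ≤ L x)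
    (h : IsInsensitive L h₂) (h₁0 : ∀ᶠ x in atTop, 0 ≤ h₁ x)
    (h₁₂ : ∀ᶠ x in atTop, h₁ x ≤ h₂ x) : IsInsensitive L h₁ :=
  tendsto_div_of_le_of_le hL hL0 (by filter_upwards [h₁0] with x hx; linarith)
    (by filter_upwards [h₁₂] with x hx; linarith) h

lemma IsInsensitive.add_comp {h k : ℝ → ℝ} (hL0 : ∀ x, 0 < L x) (hh : IsInsensitive L h)
    (hk : IsInsensitive L k) (hφ : Tendsto (fun x => x + h x) atTop atTop) :
    IsInsensitive L (fun x => h x + k (x + h x)) := by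
  have := hh.mul (hk.comp hφ)
  rw [one_mul] at this
  refine this.congr fun x => ?_
  simp only [Function.comp_apply, ← add_assoc]
  field_simp [(hL0 (x + h x)).ne']

variable {g : ℝ → ℝ}

lemma tendsto_add_const_mul_atTop (hg0 : ∀ x, 0 ≤ x → 0 ≤ g x) {a : ℝ} (ha : 0 ≤ a) :
    Tendsto (fun x => x + a * g x) atTop atTop :=
  tendsto_atTop_mono' atTop ((eventually_ge_atTop 0).mono fun x hx =>
    le_add_of_nonneg_right (mul_nonneg ha (hg0 x hx))) tendsto_id

lemma IsInsensitive.double (hL : Antitone L) (hL0 : ∀ x, 0 < L x)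
    (hg0 : ∀ x, 0 ≤ x → 0 ≤ g x) (hg : MonotoneOn g (Ici 0)) {a : ℝ} (ha : 0 ≤ a)
    (h : IsInsensitive L (fun x => a * g x)) : IsInsensitive L (fun x => 2 * a * g x) := by
  refine (h.add_comp hL0 h (tendsto_add_const_mul_atTop hg0 ha)).mono hL (hL0 · |>.le) ?_ ?_
  · filter_upwards [eventually_ge_atTop 0] with x hx
    have := hg0 x hx
    positivity
  · filter_upwards [eventually_ge_atTop 0] with x hx
    have hx' : x ≤ x + a * g x := le_add_of_nonneg_right (mul_nonneg ha (hg0 x hx))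
    have := hg hx (hx.trans hx') hx'
    nlinarith

lemma IsInsensitive.const_mul (hL : Antitone L) (hL0 : ∀ x, 0 < L x)
    (hg0 : ∀ x, 0 ≤ x → 0 ≤ g x) (hg : MonotoneOn g (Ici 0)) {a : ℝ} (ha : 0 < a)
    (h : IsInsensitive L (fun x => a * g x)) {c : ℝ} (hc : 0 ≤ c) :
    IsInsensitive L (fun x => c * g x) := by
  have hpow : ∀ n : ℕ, IsInsensitive L (fun x => 2 ^ n * a * g x) := by
    intro n
    induction n with
    | zero => simpa using h
    | succ n ih =>
      simpa only [pow_succ, mul_comm _ (2 : ℝ), mul_assoc] using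
        ih.double hL hL0 hg0 hg (by positivity)
  obtain ⟨n, hn⟩ := pow_unbounded_of_one_lt (c / a) one_lt_two
  refine (hpow n).mono hL (hL0 · |>.le) ?_ ?_
  · filter_upwards [eventually_ge_atTop 0] with x hx
    exact mul_nonneg hc (hg0 x hx)
  · filter_upwards [eventually_ge_atTop 0] with x hx
    exact mul_le_mul_of_nonneg_right ((div_le_iff₀ ha).1 hn.le) (hg0 x hx)

lemma isInsensitive_of_tendsto_sub (hL : Antitone L) (hL0 : ∀ x, 0 < L x)
    (hg0 : ∀ x, 0 ≤ x → 0 ≤ g x) (hg : MonotoneOn g (Ici 0)) {ξ : ℝ} (hξ : 0 ≤ ξ)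
    (h : Tendsto (fun x => L (x - ξ * g x) / L x) atTop (𝓝 1)) :
    IsInsensitive L (fun x => ξ * g x) := by
  have hinv := (h.comp (tendsto_add_const_mul_atTop hg0 hξ)).inv₀ one_ne_zero
  rw [inv_one] at hinv
  refine tendsto_of_tendsto_of_tendsto_of_le_of_le' hinv tendsto_const_nhds ?_ ?_
  · filter_upwards [eventually_ge_atTop 0] with x hx
    have hx' : x ≤ x + ξ * g x := le_add_of_nonneg_right (mul_nonneg hξ (hg0 x hx))
    have hsub : x + ξ * g x - ξ * g (x + ξ * g x) ≤ x := by
      nlinarith [hg hx (hx.trans hx') hx']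
    rw [Function.comp_apply, inv_div]
    exact div_le_div_of_nonneg_left (hL0 _).le (hL0 x) (hL hsub)
  · filter_upwards [eventually_ge_atTop 0] with x hx
    exact div_le_one_of_le₀ (hL (le_add_of_nonneg_right (mul_nonneg hξ (hg0 x hx))))
      (hL0 x).le

end Insensitive

lemma one_add_rpow_le {p z : ℝ} (hp : 1 ≤ p) (hz0 : 0 ≤ z) (hz1 : z ≤ 1) :
    (1 + z) ^ p ≤ 1 + (2 ^ p - 1) * z := by
  have := (convexOn_rpow hp).2 (x := 1) (y := 2) (by simp) (by simp)
    (sub_nonneg.2 hz1) hz0 (sub_add_cancel 1 z)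
  simp only [smul_eq_mul, one_rpow, show (1 - z) * 1 + z * 2 = 1 + z by ring] at this
  linarith

lemma add_rpow_le {p x y : ℝ} (hp : 1 ≤ p) (hx : 0 < x) (hy : 0 ≤ y) (hyx : y ≤ x) :
    (x + y) ^ p ≤ x ^ p + (2 ^ p - 1) * y * x ^ (p - 1) := by
  have hz := one_add_rpow_le hp (div_nonneg hy hx.le) ((div_le_one hx).2 hyx)
  calc (x + y) ^ p = x ^ p * (1 + y / x) ^ p := by
        rw [← mul_rpow hx.le (by positivity), mul_one_add, mul_div_cancel₀ _ hx.ne']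
    _ ≤ x ^ p * (1 + (2 ^ p - 1) * (y / x)) := by gcongr
    _ = x ^ p + (2 ^ p - 1) * y * x ^ (p - 1) := by
        rw [rpow_sub_one hx.ne']
        ring

lemma add_rpow_inv_le {θ x y : ℝ} (hθ0 : 0 < θ) (hθ1 : θ ≤ 1) (hx : 0 < x) (hy : 0 ≤ y)
    (hyx : y ≤ x) :
    (x + y) ^ θ⁻¹ ≤ x ^ θ⁻¹ + (2 ^ θ⁻¹ - 1) * y * (x ^ θ⁻¹) ^ (1 - θ) := by
  rw [← rpow_mul hx.le, show θ⁻¹ * (1 - θ) = θ⁻¹ - 1 by field_simp]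
  exact add_rpow_le ((one_le_inv₀ hθ0).2 hθ1) hx hy hyx

lemma tailP_antitone {Ω : Type*} [MeasurableSpace Ω] (μ : Measure Ω) [IsFiniteMeasure μ]
    (X : Ω → ℝ) : Antitone (tailP μ X) := fun _ _ hab =>
  ENNReal.toReal_mono (measure_ne_top μ _) (measure_mono fun _ hω => hab.trans_lt hω)

lemma tailP_rpow {Ω : Type*} [MeasurableSpace Ω] (μ : Measure Ω) {X : Ω → ℝ}
    (hX : ∀ ω, 0 ≤ X ω) {θ x : ℝ} (hθ : 0 < θ) (hx : 0 ≤ x) :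
    tailP μ (fun ω => X ω ^ θ) x = tailP μ X (x ^ θ⁻¹) := by
  unfold tailP
  congr 2
  ext ω
  exact (rpow_inv_lt_iff_of_pos hx (hX ω) hθ).symm

/-- For a nonnegative random variable `X` and `0 < θ ≤ 1`, if
`P(X > x - ξ x^{1-θ}) / P(X > x) → 1` for some `ξ ≠ 0`, then `X^θ` is long-tailed. -/
theorem stmt3 {Ω : Type*} [MeasurableSpace Ω] (μ : Measure Ω) [IsProbabilityMeasure μ]
    (X : Ω → ℝ) (hX : ∀ ω, 0 ≤ X ω) (θ : ℝ) (hθ0 : 0 < θ) (hθ1 : θ ≤ 1)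
    (hpos : ∀ x ≥ 0, 0 < tailP μ X x)
    (ξ : ℝ) (hξ : ξ ≠ 0)
    (hlim : Tendsto (fun x => tailP μ X (x - ξ * x ^ (1 - θ)) / tailP μ X x) atTop (nhds 1)) :
    LongTailed μ (fun ω => X ω ^ θ) := by
  set L := tailP μ X
  have hL : Antitone L := tailP_antitone μ X
  have hL0 : ∀ x, 0 < L x := fun x =>
    (hpos _ (le_max_right x 0)).trans_le (hL (le_max_left x 0))
  have hg0 : ∀ x : ℝ, 0 ≤ x → 0 ≤ x ^ (1 - θ) := fun x hx => rpow_nonneg hx _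
  have hg := monotoneOn_rpow_Ici_of_exponent_nonneg (sub_nonneg.2 hθ1)
  obtain ⟨a, ha, hins⟩ : ∃ a > 0, IsInsensitive L (fun x => a * x ^ (1 - θ)) := by
    rcases hξ.lt_or_gt with hξn | hξp
    · exact ⟨-ξ, neg_pos.2 hξn, hlim.congr fun x => by simp only [neg_mul, sub_eq_add_neg]⟩
    · exact ⟨ξ, hξp, isInsensitive_of_tendsto_sub hL hL0 hg0 hg hξp.le hlim⟩
  refine ⟨fun x hx => tailP_rpow μ hX hθ0 hx ▸ hL0 _, fun y hy => ?_⟩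
  have hc0 : 0 ≤ (2 ^ θ⁻¹ - 1) * y :=
    mul_nonneg (sub_nonneg.2 (one_le_rpow one_le_two (inv_nonneg.2 hθ0.le))) hy.le
  have hc := (hins.const_mul hL hL0 hg0 hg ha hc0).comp (tendsto_rpow_atTop (inv_pos.2 hθ0))
  refine (tendsto_div_of_le_of_le (b := fun x => (x + y) ^ θ⁻¹) hL (hL0 · |>.le) ?_ ?_
    hc).congr' ?_
  · filter_upwards [eventually_ge_atTop 0] with x hx
    exact rpow_le_rpow hx (by linarith) (inv_nonneg.2 hθ0.le)
  · filter_upwards [eventually_ge_atTop y] with x hx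
    exact add_rpow_inv_le hθ0 hθ1 (hy.trans_le hx) hy.le hx
  · filter_upwards [eventually_ge_atTop 0] with x hx
    rw [tailP_rpow μ hX hθ0 hx, tailP_rpow μ hX hθ0 (by linarith)]
end

section
/- Under the setting of the matrix convolution tail lemma, if additionally F is square and Σ_{n≥0} (F(∞))^n = (I − F(∞))^{-1} < ∞, then limsup_{x→∞} Σ_{n=0}^∞ (F^{*n})‾(x)/P(Y > x) ≤ (I − F(∞))^{-1} F̃ (I − F(∞))^{-1} entrywise, where F^{*0}(x) = 1(x ≥ 0) I and F^{*n} = F^{*(n−1)} ∗ F. -/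
/-!
Write `T(x) = P(Y > x)`, `B = Σₙ F(∞)ⁿ` and `U_{ij}(x) = Σₙ (F^{*n})‾_{ij}(x)`. Splitting off the
`n = 0` term gives the renewal equation
`U_{ik} = (F^{*0})‾_{ik} + Σ_j (B_{ij} F_{jk}(-∞) + U_{ij} ∗ F_{jk})`.

The analytic input is a convolution estimate: if `w ≤ b` is antitone with `w ≲ L T` and `ν` is a
finite measure of mass `m` with `ν(x, ∞) ≲ C T(x)`, then `∫ w(x - y) dν(y) ≤ (L m + b C + o(1)) T(x)`.
Split the integral at `h` and `x - h`: the outer pieces give `L m` and `b C` because `T` is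
long-tailed, and the middle piece is `o(T)` because `P(Y₁ + Y₂ > x) ∼ 2 T(x)`.

Applied to the renewal equation, `l_j = limsup U_{ij} / T` satisfies `l ≤ l F(∞) + (B F̃)_i`, and
iterating with `Σₙ F(∞)ⁿ = B` gives `l ≤ (B F̃ B)_i`. In `ℝ` the limsup of an unbounded function is
`0`, so an unbounded ratio satisfies its inequality trivially; when `U_{ik} / T` is bounded, the
renewal equation makes every `U_{ij}`, and every tail `F_{jk}(∞) - F_{jk}` entering it with positive
weight, `O(T)`, and forces the atoms `F_{jk}(-∞)` to vanish.
-/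

open MeasureTheory Filter Set ProbabilityTheory Real

/-- A nonnegative random variable `Y` is subexponential (`Y ∈ 𝓢`) if `P(Y > x) > 0` for all
`x ≥ 0` and `P(Y₁ + Y₂ > x) ∼ 2 P(Y > x)` for independent copies `Y₁, Y₂`. -/
def SubexpRV {Ω : Type*} [MeasurableSpace Ω] (μ : Measure Ω) [IsProbabilityMeasure μ]
    (Y : Ω → ℝ) : Prop :=
  (∀ x ≥ 0, 0 < tailP μ Y x) ∧
  Tendsto (fun x => ((μ.prod μ) {p : Ω × Ω | x < Y p.1 + Y p.2}).toReal / tailP μ Y x)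
    atTop (nhds 2)

/-- The `n`-fold convolution `F^{*n}` of a square matrix-valued d.f. `F`, with
`F^{*0}(x) = 1(x ≥ 0) I` and `F^{*(n+1)} = F^{*n} ∗ F`. -/
noncomputable def iterConv {d : ℕ} (F : Fin d → Fin d → StieltjesFunction ℝ) :
    ℕ → Fin d → Fin d → ℝ → ℝ
  | 0 => fun i j x => if 0 ≤ x then (if i = j then 1 else 0) else 0
  | n + 1 => fun i k x => ∑ j, ∫ y, iterConv F n i j (x - y) ∂(F j k).measure

open scoped Topology

section RealLimsup

variable {α : Type*} {l : Filter α} {f g : α → ℝ}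

lemma limsup_eq_zero_of_not_isBoundedUnder (h : ¬ IsBoundedUnder (· ≤ ·) l f) :
    limsup f l = 0 := by
  rw [limsup_eq, ← Real.sInf_empty]
  exact congrArg sInf (eq_empty_of_forall_notMem fun a ha => h ⟨a, ha⟩)

lemma limsup_nonneg_of_nonneg [l.NeBot] (hf : ∀ x, 0 ≤ f x) : 0 ≤ limsup f l := by
  by_cases hb : IsBoundedUnder (· ≤ ·) l f
  · exact le_limsup_of_frequently_le (Frequently.of_forall hf) hb
  · rw [limsup_eq_zero_of_not_isBoundedUnder hb]

lemma limsup_le_of_nonneg_of_eventually_le [l.NeBot] (hf : ∀ x, 0 ≤ f x) {a : ℝ}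
    (h : ∀ᶠ x in l, f x ≤ a) : limsup f l ≤ a :=
  limsup_le_of_le (isCoboundedUnder_le_of_le l hf) h

lemma isBigO_iff_isBoundedUnder_div (hf : ∀ x, 0 ≤ f x) (hg : ∀ x, 0 < g x) :
    f =O[l] g ↔ IsBoundedUnder (· ≤ ·) l fun x => f x / g x := by
  rw [Asymptotics.isBigO_iff_isBoundedUnder_le_div (Eventually.of_forall fun x => (hg x).ne')]
  simp only [Real.norm_of_nonneg (hf _), Real.norm_of_nonneg (hg _).le]

lemma eventually_le_mul_of_limsup_div_le (hg : ∀ x, 0 < g x)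
    (hb : IsBoundedUnder (· ≤ ·) l fun x => f x / g x) {c : ℝ}
    (hc : limsup (fun x => f x / g x) l ≤ c) {δ : ℝ} (hδ : 0 < δ) :
    ∀ᶠ x in l, f x ≤ (c + δ) * g x :=
  (eventually_lt_of_limsup_lt (hc.trans_lt (lt_add_of_pos_right c hδ)) hb).mono
    fun x hx => ((div_lt_iff₀ (hg x)).1 hx).le

end RealLimsup

open Matrix in
lemma Matrix.vecMul_le_vecMul_left {ι : Type*} [Fintype ι] {M : Matrix ι ι ℝ}
    (hM : ∀ i j, 0 ≤ M i j) {v w : ι → ℝ} (hvw : v ≤ w) : v ᵥ* M ≤ w ᵥ* M :=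
  fun j => Finset.sum_le_sum fun i _ => mul_le_mul_of_nonneg_right (hvw i) (hM i j)

open Matrix in
lemma Matrix.le_vecMul_of_le_vecMul_add {ι : Type*} [Fintype ι] [DecidableEq ι]
    {A S : Matrix ι ι ℝ} (hA : ∀ i j, 0 ≤ A i j) (hS : HasSum (fun n => A ^ n) S)
    {l r : ι → ℝ} (hl : l ≤ l ᵥ* A + r) : l ≤ r ᵥ* S := by
  have hiter : ∀ m, l ≤ l ᵥ* A ^ m + r ᵥ* ∑ t ∈ Finset.range m, A ^ t := by
    intro m
    induction m with
    | zero => simp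
    | succ m ih =>
      calc l ≤ l ᵥ* A ^ m + r ᵥ* ∑ t ∈ Finset.range m, A ^ t := ih
        _ ≤ (l ᵥ* A + r) ᵥ* A ^ m + r ᵥ* ∑ t ∈ Finset.range m, A ^ t :=
          add_le_add_left (vecMul_le_vecMul_left (pow_apply_nonneg hA m) hl) _
        _ = l ᵥ* A ^ (m + 1) + r ᵥ* ∑ t ∈ Finset.range (m + 1), A ^ t := by
          rw [add_vecMul, vecMul_vecMul, ← pow_succ', Finset.sum_range_succ, vecMul_add]
          abel
  have hlim : Tendsto (fun m => l ᵥ* A ^ m + r ᵥ* ∑ t ∈ Finset.range m, A ^ t) atTop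
      (𝓝 (l ᵥ* 0 + r ᵥ* S)) :=
    (((continuous_const.matrix_vecMul continuous_id).tendsto _).comp
      hS.summable.tendsto_atTop_zero).add
      (((continuous_const.matrix_vecMul continuous_id).tendsto _).comp hS.tendsto_sum_nat)
  rw [vecMul_zero, zero_add] at hlim
  exact ge_of_tendsto' hlim hiter

lemma integral_eq_preimage_Iic_add_Ioc_add_Ioi {α : Type*} [MeasurableSpace α] {ρ : Measure α}
    {f : α → ℝ} (hf : Integrable f ρ) {g : α → ℝ} (hg : Measurable g) {a b : ℝ} (hab : a ≤ b) :
    ∫ x, f x ∂ρ = ∫ x in g ⁻¹' Iic a, f x ∂ρ + ∫ x in g ⁻¹' Ioc a b, f x ∂ρ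
      + ∫ x in g ⁻¹' Ioi b, f x ∂ρ := by
  rw [← integral_add_compl (hg measurableSet_Iic) hf, ← preimage_compl, compl_Iic,
    ← Ioc_union_Ioi_eq_Ioi hab, preimage_union, setIntegral_union
      (Ioc_disjoint_Ioi_same.preimage g) (hg measurableSet_Ioi) hf.integrableOn hf.integrableOn,
    add_assoc]

lemma integrable_comp_sub_of_norm_le {ν : Measure ℝ} [IsFiniteMeasure ν] {f : ℝ → ℝ}
    (hf : Measurable f) {C : ℝ} (hC : ∀ z, ‖f z‖ ≤ C) (x : ℝ) :
    Integrable (fun y => f (x - y)) ν :=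
  Integrable.of_bound (hf.comp (measurable_const.sub measurable_id)).aestronglyMeasurable C
    (Eventually.of_forall fun _ => hC _)

lemma mul_measureReal_Ici_le_integral_comp_sub {ν : Measure ℝ} [IsFiniteMeasure ν] {u : ℝ → ℝ}
    (hu : Antitone u) (hu0 : ∀ z, 0 ≤ u z) {x : ℝ} (hint : Integrable (fun y => u (x - y)) ν)
    (a : ℝ) :
    u a * ν.real (Ici (x - a)) ≤ ∫ y, u (x - y) ∂ν := by
  rw [mul_comm, ← smul_eq_mul]
  exact (setIntegral_ge_of_const_le measurableSet_Ici (measure_ne_top _ _)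
    (fun y hy => hu (by linarith [hy.out])) hint.integrableOn).trans
    (setIntegral_le_integral hint (Eventually.of_forall fun _ => hu0 _))

namespace StieltjesFunction

variable (G : StieltjesFunction ℝ) {c : ℝ}

lemma le_of_tendsto_atTop (hG : Tendsto G atTop (𝓝 c)) (x : ℝ) : G x ≤ c :=
  G.mono.ge_of_tendsto hG x

lemma measureReal_Ioi (hG : Tendsto G atTop (𝓝 c)) (x : ℝ) :
    G.measure.real (Ioi x) = c - G x := by
  rw [measureReal_def, G.measure_Ioi hG,
    ENNReal.toReal_ofReal (sub_nonneg.2 (G.le_of_tendsto_atTop hG x))]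

variable {G} (hG0 : ∀ x, 0 ≤ G x)
include hG0

lemma tendsto_atBot_iInf : Tendsto G atBot (𝓝 (⨅ x, G x)) :=
  tendsto_atBot_ciInf G.mono ⟨0, by rintro _ ⟨x, rfl⟩; exact hG0 x⟩

lemma iInf_nonneg : 0 ≤ ⨅ x, G x := le_ciInf hG0

variable (hG : Tendsto G atTop (𝓝 c))
include hG

lemma isFiniteMeasure_measure : IsFiniteMeasure G.measure :=
  G.isFiniteMeasure (G.tendsto_atBot_iInf hG0) hG

lemma measureReal_univ : G.measure.real univ = c - ⨅ x, G x := by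
  rw [measureReal_def, G.measure_univ (G.tendsto_atBot_iInf hG0) hG, ENNReal.toReal_ofReal]
  exact sub_nonneg.2 ((ciInf_le ⟨0, by rintro _ ⟨x, rfl⟩; exact hG0 x⟩ 0).trans
    (G.le_of_tendsto_atTop hG 0))

lemma measureReal_univ_le : G.measure.real univ ≤ c := by
  rw [G.measureReal_univ hG0 hG]; linarith [G.iInf_nonneg hG0]

end StieltjesFunction

section TailFunction

variable {Ω : Type*} [MeasurableSpace Ω] {μ : Measure Ω} {Y : Ω → ℝ}

lemma tailP_nonneg (x : ℝ) : 0 ≤ tailP μ Y x := ENNReal.toReal_nonneg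

lemma tailP_antitone_s16 [IsFiniteMeasure μ] : Antitone (tailP μ Y) := fun _ _ hab =>
  ENNReal.toReal_mono (measure_ne_top _ _) (measure_mono fun _ h => hab.trans_lt h)

lemma measurable_tailP [IsFiniteMeasure μ] : Measurable (tailP μ Y) :=
  tailP_antitone_s16.measurable

lemma tailP_le_one [IsProbabilityMeasure μ] (x : ℝ) : tailP μ Y x ≤ 1 := measureReal_le_one

lemma tailP_of_neg [IsProbabilityMeasure μ] (hY0 : ∀ ω, 0 ≤ Y ω) {x : ℝ} (hx : x < 0) :
    tailP μ Y x = 1 := by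
  have : {ω | x < Y ω} = univ := eq_univ_of_forall fun ω => hx.trans_le (hY0 ω)
  simp [tailP, this]

lemma tailP_eq_measureReal_map (hY : Measurable Y) (x : ℝ) :
    tailP μ Y x = (μ.map Y).real (Ioi x) :=
  (map_measureReal_apply hY measurableSet_Ioi).symm

lemma tendsto_tailP_atTop [IsFiniteMeasure μ] (hY : Measurable Y) :
    Tendsto (tailP μ Y) atTop (𝓝 0) := by
  have hempty : (⋂ x : ℝ, {ω | x < Y ω}) = ∅ :=
    eq_empty_of_forall_notMem fun ω hω => lt_irrefl (Y ω) (mem_iInter.1 hω (Y ω))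
  have h := tendsto_measure_iInter_atTop (μ := μ) (s := fun x : ℝ => {ω | x < Y ω})
    (fun _ => (hY measurableSet_Ioi).nullMeasurableSet) (fun _ _ hab _ h => hab.trans_lt h)
    ⟨0, measure_ne_top _ _⟩
  rw [hempty, measure_empty] at h
  exact (ENNReal.tendsto_toReal ENNReal.zero_ne_top).comp h

lemma SubexpRV.tailP_pos [IsProbabilityMeasure μ] (hY : SubexpRV μ Y) (hY0 : ∀ ω, 0 ≤ Y ω)
    (x : ℝ) : 0 < tailP μ Y x := by
  rcases lt_or_ge x 0 with hx | hx
  · rw [tailP_of_neg hY0 hx]; exact one_pos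
  · exact hY.1 x hx

end TailFunction

section Subexponential

variable {Ω : Type*} [MeasurableSpace Ω] {μ : Measure Ω} [IsProbabilityMeasure μ] {Y : Ω → ℝ}

lemma integrable_tailP_comp {α : Type*} [MeasurableSpace α] {ν : Measure α} [IsFiniteMeasure ν]
    {g : α → ℝ} (hg : Measurable g) : Integrable (fun a => tailP μ Y (g a)) ν :=
  Integrable.of_bound (measurable_tailP.comp hg).aestronglyMeasurable 1
    (Eventually.of_forall fun _ => by
      rw [Real.norm_of_nonneg (tailP_nonneg _)]; exact tailP_le_one _)

lemma measureReal_prod_lt_add_eq_integral (hY : Measurable Y) (x : ℝ) :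
    ((μ.prod μ) {p : Ω × Ω | x < Y p.1 + Y p.2}).toReal = ∫ ω, tailP μ Y (x - Y ω) ∂μ := by
  have hS : MeasurableSet {p : Ω × Ω | x < Y p.1 + Y p.2} :=
    measurableSet_lt measurable_const ((hY.comp measurable_fst).add (hY.comp measurable_snd))
  have hslice : ∀ ω, Prod.mk ω ⁻¹' {p : Ω × Ω | x < Y p.1 + Y p.2} = {ω' | x - Y ω < Y ω'} := by
    intro ω; ext ω'; simp only [mem_preimage, mem_ofPred_eq]; constructor <;> intro h <;> linarith
  have hmeas : Measurable fun t : ℝ => μ {ω' | t < Y ω'} :=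
    Antitone.measurable fun _ _ hab => measure_mono fun _ h => hab.trans_lt h
  rw [Measure.prod_apply hS, ← integral_toReal]
  · simp only [hslice, tailP]
  · simp only [hslice]; exact (hmeas.comp (measurable_const.sub hY)).aemeasurable
  · exact Eventually.of_forall fun _ => measure_lt_top _ _

lemma measureReal_preimage_Iic (hY : Measurable Y) (h : ℝ) :
    μ.real (Y ⁻¹' Iic h) = 1 - tailP μ Y h := by
  rw [← compl_Ioi, preimage_compl, measureReal_compl (hY measurableSet_Ioi), probReal_univ]
  rfl

lemma integral_tailP_sub_ge (hY : Measurable Y) (hY0 : ∀ ω, 0 ≤ Y ω) {h x : ℝ} (hhx : h ≤ x) :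
    (1 - tailP μ Y h) * tailP μ Y x + ∫ ω in Y ⁻¹' Ioc h x, tailP μ Y (x - Y ω) ∂μ
      + tailP μ Y x ≤ ∫ ω, tailP μ Y (x - Y ω) ∂μ := by
  have hf : Integrable (fun ω => tailP μ Y (x - Y ω)) μ :=
    integrable_tailP_comp (measurable_const.sub hY)
  have hsplit := integral_eq_preimage_Iic_add_Ioc_add_Ioi hf hY hhx
  have hlow : (1 - tailP μ Y h) * tailP μ Y x ≤ ∫ ω in Y ⁻¹' Iic h, tailP μ Y (x - Y ω) ∂μ := by
    rw [← measureReal_preimage_Iic hY, ← smul_eq_mul]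
    exact setIntegral_ge_of_const_le (hY measurableSet_Iic) (measure_ne_top _ _)
      (fun ω _ => tailP_antitone_s16 (by linarith [hY0 ω])) hf.integrableOn
  have hhigh : ∫ ω in Y ⁻¹' Ioi x, tailP μ Y (x - Y ω) ∂μ = tailP μ Y x := by
    rw [setIntegral_congr_fun (hY measurableSet_Ioi)
      (fun ω hω => tailP_of_neg hY0 (sub_neg.2 hω)), setIntegral_const, smul_eq_mul, mul_one]
    rfl
  linarith

lemma measureReal_preimage_Ioc (hY : Measurable Y) {h x : ℝ} (hhx : h ≤ x) :
    μ.real (Y ⁻¹' Ioc h x) = tailP μ Y h - tailP μ Y x := by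
  have : tailP μ Y h = μ.real (Y ⁻¹' Ioc h x) + tailP μ Y x := by
    rw [tailP_eq_measureReal_map hY, tailP_eq_measureReal_map hY, ← Ioc_union_Ioi_eq_Ioi hhx,
      measureReal_union Ioc_disjoint_Ioi_same measurableSet_Ioi,
      map_measureReal_apply hY measurableSet_Ioc]
  linarith

lemma setIntegral_tailP_sub_eq_integral {ν : Measure ℝ} [IsFiniteMeasure ν] (hY : Measurable Y)
    {s : Set ℝ} (hs : MeasurableSet s) (x : ℝ) :
    ∫ y in s, tailP μ Y (x - y) ∂ν = ∫ ω, ν.real (s ∩ Ioi (x - Y ω)) ∂μ := by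
  set S := {p : ℝ × Ω | p.1 ∈ s ∧ x - p.1 < Y p.2}
  have hS : MeasurableSet S := (measurable_fst hs).inter
    (measurableSet_lt (measurable_const.sub measurable_fst) (hY.comp measurable_snd))
  have hleft : (ν.prod μ) S = ∫⁻ y in s, μ {ω | x - y < Y ω} ∂ν := by
    rw [Measure.prod_apply hS, ← lintegral_indicator hs]
    congr 1 with y
    by_cases hy : y ∈ s <;> simp [S, hy]
  have hright : (ν.prod μ) S = ∫⁻ ω, ν (s ∩ Ioi (x - Y ω)) ∂μ := by
    rw [Measure.prod_apply_symm hS]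
    congr 1 with ω
    congr 1 with y
    simp only [S, mem_preimage, mem_ofPred_eq, mem_inter_iff, mem_Ioi]
    constructor <;> rintro ⟨h1, h2⟩ <;> exact ⟨h1, by linarith⟩
  have hmono : Monotone fun y => μ {ω | x - y < Y ω} :=
    fun a b hab => measure_mono fun ω (h : x - a < Y ω) => show x - b < Y ω by linarith
  have hanti : Antitone fun t => ν (s ∩ Ioi t) :=
    fun _ _ hab => measure_mono (inter_subset_inter_right _ (Ioi_subset_Ioi hab))
  calc ∫ y in s, tailP μ Y (x - y) ∂ν = ((ν.prod μ) S).toReal := by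
        rw [hleft, ← integral_toReal hmono.measurable.aemeasurable
          (Eventually.of_forall fun _ => measure_lt_top _ _)]
        rfl
    _ = ∫ ω, ν.real (s ∩ Ioi (x - Y ω)) ∂μ := by
        have hm : Measurable fun ω => ν (s ∩ Ioi (x - Y ω)) :=
          hanti.measurable.comp (measurable_const.sub hY)
        rw [hright, ← integral_toReal hm.aemeasurable
          (Eventually.of_forall fun _ => measure_lt_top _ _)]
        rfl

lemma setIntegral_Ioc_tailP_sub_le {ν : Measure ℝ} [IsFiniteMeasure ν] (hY : Measurable Y)
    {C h x : ℝ} (hC : 0 ≤ C) (htail : ∀ z ≥ h, ν.real (Ioi z) ≤ C * tailP μ Y z) :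
    ∫ y in Ioc h (x - h), tailP μ Y (x - y) ∂ν
      ≤ C * ∫ ω in Y ⁻¹' Ioc h (x - h), tailP μ Y (x - Y ω) ∂μ
        + C * tailP μ Y h * tailP μ Y (x - h) := by
  set A := Y ⁻¹' Ioc h (x - h)
  set B := Y ⁻¹' Ioi (x - h)
  have hpt : ∀ ω, ν.real (Ioc h (x - h) ∩ Ioi (x - Y ω))
      ≤ A.indicator (fun ω => C * tailP μ Y (x - Y ω)) ω
        + B.indicator (fun _ => C * tailP μ Y h) ω := by
    intro ω
    have hA0 : 0 ≤ A.indicator (fun ω => C * tailP μ Y (x - Y ω)) ω :=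
      indicator_nonneg (fun ω _ => mul_nonneg hC (tailP_nonneg _)) ω
    have hB0 : 0 ≤ B.indicator (fun _ => C * tailP μ Y h) ω :=
      indicator_nonneg (fun _ _ => mul_nonneg hC (tailP_nonneg _)) ω
    by_cases hA : ω ∈ A
    · rw [indicator_of_mem hA]
      calc ν.real (Ioc h (x - h) ∩ Ioi (x - Y ω)) ≤ ν.real (Ioi (x - Y ω)) :=
            measureReal_mono inter_subset_right
        _ ≤ C * tailP μ Y (x - Y ω) := htail _ (by linarith [hA.2])
        _ ≤ _ := le_add_of_nonneg_right hB0
    by_cases hB : ω ∈ B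
    · rw [indicator_of_mem hB]
      calc ν.real (Ioc h (x - h) ∩ Ioi (x - Y ω)) ≤ ν.real (Ioi h) :=
            measureReal_mono (inter_subset_left.trans Ioc_subset_Ioi_self)
        _ ≤ C * tailP μ Y h := htail h le_rfl
        _ ≤ _ := le_add_of_nonneg_left hA0
    have hY_le : Y ω ≤ h := by
      by_contra! hlt
      exact hA ⟨hlt, not_lt.1 hB⟩
    have hempty : Ioc h (x - h) ∩ Ioi (x - Y ω) = ∅ :=
      eq_empty_of_forall_notMem fun y hy => by linarith [hy.1.2, hy.2.out]
    rw [hempty, measureReal_empty]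
    exact add_nonneg hA0 hB0
  have hIA : Integrable (A.indicator fun ω => C * tailP μ Y (x - Y ω)) μ :=
    ((integrable_tailP_comp (measurable_const.sub hY)).const_mul C).indicator
      (hY measurableSet_Ioc)
  have hIB : Integrable (B.indicator fun _ => C * tailP μ Y h) μ :=
    (integrable_const _).indicator (hY measurableSet_Ioi)
  rw [setIntegral_tailP_sub_eq_integral hY measurableSet_Ioc]
  refine (integral_mono_of_nonneg (Eventually.of_forall fun _ => measureReal_nonneg)
    (hIA.add hIB) (Eventually.of_forall hpt)).trans_eq ?_
  rw [integral_add' hIA hIB, integral_indicator (hY measurableSet_Ioc), integral_const_mul,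
    integral_indicator_const _ (hY measurableSet_Ioi), smul_eq_mul]
  exact congrArg _ (mul_comm _ _)

lemma integral_comp_sub_le_of_forall_ge {ν : Measure ℝ} [IsFiniteMeasure ν] {w : ℝ → ℝ}
    {B L C h x : ℝ} (hw : Antitone w) (hw0 : ∀ z, 0 ≤ w z) (hwB : ∀ z, w z ≤ B) (hx : 2 * h ≤ x)
    (hwL : ∀ z ≥ h, w z ≤ L * tailP μ Y z) (hνC : ∀ z ≥ h, ν.real (Ioi z) ≤ C * tailP μ Y z) :
    ∫ y, w (x - y) ∂ν ≤ L * ν.real univ * tailP μ Y (x - h)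
      + L * ∫ y in Ioc h (x - h), tailP μ Y (x - y) ∂ν + B * C * tailP μ Y (x - h) := by
  have hwx : Integrable (fun y => w (x - y)) ν := integrable_comp_sub_of_norm_le hw.measurable
    (fun z => by rw [Real.norm_of_nonneg (hw0 z)]; exact hwB z) x
  have hsplit := integral_eq_preimage_Iic_add_Ioc_add_Ioi hwx measurable_id
    (by linarith : h ≤ x - h)
  simp only [preimage_id_eq, id] at hsplit
  have hleft : ∫ y in Iic h, w (x - y) ∂ν ≤ L * ν.real univ * tailP μ Y (x - h) := by
    calc ∫ y in Iic h, w (x - y) ∂ν ≤ ∫ _ in Iic h, w (x - h) ∂ν :=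
          setIntegral_mono_on hwx.integrableOn (integrable_const _).integrableOn measurableSet_Iic
            fun y hy => hw (by linarith [hy.out])
      _ = ν.real (Iic h) * w (x - h) := by rw [setIntegral_const, smul_eq_mul]
      _ ≤ ν.real univ * (L * tailP μ Y (x - h)) :=
          mul_le_mul (measureReal_mono (subset_univ _)) (hwL _ (by linarith)) (hw0 _)
            measureReal_nonneg
      _ = L * ν.real univ * tailP μ Y (x - h) := by ring
  have hmiddle : ∫ y in Ioc h (x - h), w (x - y) ∂ν
      ≤ L * ∫ y in Ioc h (x - h), tailP μ Y (x - y) ∂ν := by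
    rw [← integral_const_mul]
    exact setIntegral_mono_on hwx.integrableOn
      ((integrable_tailP_comp (measurable_const.sub measurable_id)).const_mul _).integrableOn
      measurableSet_Ioc fun y hy => hwL _ (by linarith [hy.2])
  have hright : ∫ y in Ioi (x - h), w (x - y) ∂ν ≤ B * C * tailP μ Y (x - h) := by
    calc ∫ y in Ioi (x - h), w (x - y) ∂ν ≤ ∫ _ in Ioi (x - h), B ∂ν :=
          setIntegral_mono_on hwx.integrableOn (integrable_const _).integrableOn measurableSet_Ioi
            fun y _ => hwB _
      _ = ν.real (Ioi (x - h)) * B := by rw [setIntegral_const, smul_eq_mul]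
      _ ≤ C * tailP μ Y (x - h) * B :=
          mul_le_mul_of_nonneg_right (hνC _ (by linarith)) ((hw0 0).trans (hwB 0))
      _ = B * C * tailP μ Y (x - h) := by ring
  linarith

variable (hYs : SubexpRV μ Y) (hY : Measurable Y) (hY0 : ∀ ω, 0 ≤ Y ω)
include hYs hY hY0

lemma SubexpRV.eventually_integral_tailP_sub_le {δ : ℝ} (hδ : 0 < δ) :
    ∀ᶠ x in atTop, ∫ ω, tailP μ Y (x - Y ω) ∂μ ≤ (2 + δ) * tailP μ Y x := by
  filter_upwards [hYs.2.eventually (eventually_le_nhds (by linarith : (2 : ℝ) < 2 + δ))] with x hx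
  rwa [measureReal_prod_lt_add_eq_integral hY, div_le_iff₀ (hYs.tailP_pos hY0 x)] at hx

lemma SubexpRV.eventually_tailP_sub_le (h : ℝ) {ε : ℝ} (hε : 0 < ε) :
    ∀ᶠ x in atTop, tailP μ Y (x - h) ≤ (1 + ε) * tailP μ Y x := by
  rcases le_or_gt h 0 with hh | hh
  · filter_upwards with x
    nlinarith [tailP_antitone_s16 (μ := μ) (Y := Y) (by linarith : x ≤ x - h),
      hYs.tailP_pos hY0 x]
  set θ := tailP μ Y h
  have hθ : 0 < θ := hYs.tailP_pos hY0 h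
  have hsmall : Tendsto (fun x => (1 + ε) * tailP μ Y x) atTop (𝓝 0) := by
    simpa using (tendsto_tailP_atTop (μ := μ) hY).const_mul (1 + ε)
  filter_upwards [hYs.eventually_integral_tailP_sub_le hY hY0 (by positivity : 0 < ε * θ / 3),
    hsmall.eventually (eventually_le_nhds (by positivity : 0 < ε * θ / 3)),
    eventually_ge_atTop h] with x hint hsmall hhx
  have hsplit := integral_tailP_sub_ge (μ := μ) hY hY0 hhx
  have hmid : tailP μ Y (x - h) * (θ - tailP μ Y x)
      ≤ ∫ ω in Y ⁻¹' Ioc h x, tailP μ Y (x - Y ω) ∂μ := by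
    rw [← measureReal_preimage_Ioc hY hhx, mul_comm, ← smul_eq_mul]
    exact setIntegral_ge_of_const_le (hY measurableSet_Ioc) (measure_ne_top _ _)
      (fun ω hω => tailP_antitone_s16 (by linarith [hω.1]))
      (integrable_tailP_comp (measurable_const.sub hY)).integrableOn
  have hTx := hYs.tailP_pos hY0 x
  have hgap : 0 < θ - tailP μ Y x := by nlinarith
  have hkey : tailP μ Y (x - h) * (θ - tailP μ Y x) ≤ (θ + ε * θ / 3) * tailP μ Y x := by
    nlinarith
  refine le_of_mul_le_mul_right (hkey.trans ?_) hgap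
  nlinarith [mul_le_mul_of_nonneg_right hsmall hTx.le, mul_pos (mul_pos hε hθ) hTx]

lemma SubexpRV.eventually_setIntegral_preimage_Ioc_le {ε : ℝ} (hε : 0 < ε) :
    ∀ᶠ h in atTop, ∀ᶠ x in atTop,
      ∫ ω in Y ⁻¹' Ioc h (x - h), tailP μ Y (x - Y ω) ∂μ ≤ ε * tailP μ Y x := by
  filter_upwards [eventually_ge_atTop 0,
    (tendsto_tailP_atTop (μ := μ) hY).eventually (eventually_le_nhds (half_pos hε))] with h hh0 hTh
  filter_upwards [hYs.eventually_integral_tailP_sub_le hY hY0 (half_pos hε),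
    eventually_ge_atTop h] with x hint hhx
  have hsplit := integral_tailP_sub_ge (μ := μ) hY hY0 hhx
  have hmono : ∫ ω in Y ⁻¹' Ioc h (x - h), tailP μ Y (x - Y ω) ∂μ
      ≤ ∫ ω in Y ⁻¹' Ioc h x, tailP μ Y (x - Y ω) ∂μ :=
    setIntegral_mono_set (integrable_tailP_comp (measurable_const.sub hY)).integrableOn
      (Eventually.of_forall fun _ => tailP_nonneg _)
      (preimage_mono (Ioc_subset_Ioc_right (by linarith))).eventuallyLE
  nlinarith [hYs.tailP_pos hY0 x]

lemma SubexpRV.eventually_setIntegral_Ioc_le {ν : Measure ℝ} [IsFiniteMeasure ν] {C : ℝ}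
    (hC : 0 ≤ C) (hν : ∀ᶠ z in atTop, ν.real (Ioi z) ≤ C * tailP μ Y z) {ε : ℝ} (hε : 0 < ε) :
    ∀ᶠ h in atTop, ∀ᶠ x in atTop,
      ∫ y in Ioc h (x - h), tailP μ Y (x - y) ∂ν ≤ ε * tailP μ Y x := by
  set ε₁ := ε / (3 * (C + 1))
  have hε₁ : 0 < ε₁ := by positivity
  have hε₁C : ε₁ * (3 * (C + 1)) = ε := div_mul_cancel₀ ε (by positivity)
  filter_upwards [hYs.eventually_setIntegral_preimage_Ioc_le hY hY0 hε₁,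
    (tendsto_tailP_atTop (μ := μ) hY).eventually (eventually_le_nhds hε₁),
    eventually_forall_ge_atTop.2 hν] with h hmid hTh htail
  filter_upwards [hmid, hYs.eventually_tailP_sub_le hY hY0 h one_pos] with x hmidx hshift
  have hTx := hYs.tailP_pos hY0 x
  nlinarith [setIntegral_Ioc_tailP_sub_le (x := x) hY hC htail, mul_le_mul_of_nonneg_left hmidx hC,
    mul_le_mul_of_nonneg_left hTh hC, tailP_nonneg (μ := μ) (Y := Y) (x - h),
    mul_le_mul_of_nonneg_left hshift (mul_nonneg hC hε₁.le)]

lemma SubexpRV.eventually_integral_comp_sub_le {ν : Measure ℝ} [IsFiniteMeasure ν] {w : ℝ → ℝ}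
    {L B C : ℝ} (hw : Antitone w) (hw0 : ∀ z, 0 ≤ w z) (hwB : ∀ z, w z ≤ B)
    (hwL : ∀ δ > 0, ∀ᶠ z in atTop, w z ≤ (L + δ) * tailP μ Y z) (hC : 0 ≤ C)
    (hνC : ∀ δ > 0, ∀ᶠ z in atTop, ν.real (Ioi z) ≤ (C + δ) * tailP μ Y z) {ε : ℝ} (hε : 0 < ε) :
    ∀ᶠ x in atTop, ∫ y, w (x - y) ∂ν ≤ (L * ν.real univ + B * C + ε) * tailP μ Y x := by
  set m := ν.real univ
  -- `δ` absorbs the errors `L + δ`, `C + δ` and the long-tail factor `1 + δ` of the three pieces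
  obtain ⟨δ, hcoef, hδ⟩ : ∃ δ, (L + δ) * m * (1 + δ) + (L + δ) * δ + B * (C + δ) * (1 + δ)
      < L * m + B * C + ε ∧ 0 < δ := by
    have hcont : Tendsto (fun δ => (L + δ) * m * (1 + δ) + (L + δ) * δ + B * (C + δ) * (1 + δ))
        (𝓝[>] 0) (𝓝 (L * m + B * C)) := by
      have : Continuous
          fun δ : ℝ => (L + δ) * m * (1 + δ) + (L + δ) * δ + B * (C + δ) * (1 + δ) := by
        fun_prop
      simpa using (this.tendsto 0).mono_left nhdsWithin_le_nhds
    exact ((hcont.eventually (gt_mem_nhds (by linarith))).and self_mem_nhdsWithin).exists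
  have hCδ : 0 ≤ C + δ := by linarith
  obtain ⟨h, hmid, hwh, htail⟩ :=
    (hYs.eventually_setIntegral_Ioc_le hY hY0 hCδ (hνC δ hδ) hδ |>.and <|
      (eventually_forall_ge_atTop.2 (hwL δ hδ)).and
        (eventually_forall_ge_atTop.2 (hνC δ hδ))).exists
  filter_upwards [hmid, hYs.eventually_tailP_sub_le hY hY0 h hδ, eventually_ge_atTop (2 * h)]
    with x hmidx hshift hx
  have hLδ : 0 ≤ L + δ := nonneg_of_mul_nonneg_left ((hw0 (x - h)).trans (hwh _ (by linarith)))
    (hYs.tailP_pos hY0 _)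
  have hB : 0 ≤ B := (hw0 0).trans (hwB 0)
  have hTx := hYs.tailP_pos hY0 x
  have hm : 0 ≤ m := measureReal_nonneg
  nlinarith [integral_comp_sub_le_of_forall_ge hw hw0 hwB hx hwh htail,
    mul_le_mul_of_nonneg_left hshift (mul_nonneg hLδ hm), mul_le_mul_of_nonneg_left hmidx hLδ,
    mul_le_mul_of_nonneg_left hshift (mul_nonneg hB hCδ)]

lemma SubexpRV.isBigO_tailP_comp_add (s : ℝ) :
    (fun x => tailP μ Y (x + s)) =O[atTop] tailP μ Y := by
  refine Asymptotics.IsBigO.of_bound 2 ?_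
  filter_upwards [hYs.eventually_tailP_sub_le hY hY0 |s| one_pos] with x hx
  rw [Real.norm_of_nonneg (tailP_nonneg _), Real.norm_of_nonneg (tailP_nonneg _)]
  calc tailP μ Y (x + s) ≤ tailP μ Y (x - |s|) := tailP_antitone_s16 (by linarith [neg_abs_le s])
    _ ≤ 2 * tailP μ Y x := by linarith

lemma SubexpRV.isBigO_of_le_comp_add {u v : ℝ → ℝ} {a c : ℝ} (hc : 0 < c)
    (huv : ∀ z, 0 ≤ u z ∧ c * u z ≤ v (z + a)) (hv : v =O[atTop] tailP μ Y) :
    u =O[atTop] tailP μ Y := by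
  have hshift : (fun z => v (z + a)) =O[atTop] tailP μ Y :=
    (hv.comp_tendsto (tendsto_atTop_add_const_right _ a tendsto_id)).trans
      (hYs.isBigO_tailP_comp_add hY hY0 a)
  refine (Asymptotics.isBigO_of_le' (c := c⁻¹) atTop fun z => ?_).trans hshift
  rw [Real.norm_of_nonneg (huv z).1, le_inv_mul_iff₀ hc]
  exact (huv z).2.trans (le_abs_self _)

end Subexponential

section IterConv

variable {d : ℕ} (F : Fin d → Fin d → StieltjesFunction ℝ) (FInf : Matrix (Fin d) (Fin d) ℝ)

/-- The paper's `(F^{*n})‾`. -/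
noncomputable def convTail (n : ℕ) (i j : Fin d) (x : ℝ) : ℝ := (FInf ^ n) i j - iterConv F n i j x

noncomputable def convTailSum (i j : Fin d) (x : ℝ) : ℝ := ∑' n, convTail F FInf n i j x

lemma convTail_zero_of_nonneg (i j : Fin d) {x : ℝ} (hx : 0 ≤ x) :
    convTail F FInf 0 i j x = 0 := by
  simp [convTail, iterConv, hx, Matrix.one_apply]

variable {F FInf} (hFnn : ∀ i j x, 0 ≤ F i j x)
  (hFInf : ∀ i j, Tendsto (F i j) atTop (𝓝 (FInf i j)))
include hFnn hFInf

lemma iterConv_monotone_and_mem_Icc (n : ℕ) (i j : Fin d) :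
    Monotone (iterConv F n i j) ∧ ∀ x, iterConv F n i j x ∈ Icc 0 ((FInf ^ n) i j) := by
  have : ∀ j k, IsFiniteMeasure (F j k).measure :=
    fun j k => (F j k).isFiniteMeasure_measure (hFnn j k) (hFInf j k)
  induction n generalizing i j with
  | zero =>
    refine ⟨fun x x' hxx' => ?_, fun x => ?_⟩ <;>
      simp only [iterConv, pow_zero, Matrix.one_apply, mem_Icc] <;> split_ifs <;> grind
  | succ n ih =>
    have hint : ∀ j k x, Integrable (fun y => iterConv F n i j (x - y)) (F j k).measure :=
      fun j k x => integrable_comp_sub_of_norm_le (ih i j).1.measurable (C := (FInf ^ n) i j)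
        (fun z => by rw [Real.norm_of_nonneg ((ih i j).2 z).1]; exact ((ih i j).2 z).2) x
    refine ⟨fun x x' hxx' => Finset.sum_le_sum fun l _ => integral_mono (hint l j x) (hint l j x')
      fun y => (ih i l).1 (by linarith), fun x => ⟨Finset.sum_nonneg fun l _ =>
        integral_nonneg fun y => ((ih i l).2 _).1, ?_⟩⟩
    rw [pow_succ, Matrix.mul_apply]
    refine Finset.sum_le_sum fun l _ => ?_
    calc ∫ y, iterConv F n i l (x - y) ∂(F l j).measure ≤ ∫ _, (FInf ^ n) i l ∂(F l j).measure :=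
          integral_mono (hint l j x) (integrable_const _) fun y => ((ih i l).2 _).2
      _ = (F l j).measure.real univ * (FInf ^ n) i l := by rw [integral_const, smul_eq_mul]
      _ ≤ FInf l j * (FInf ^ n) i l :=
          mul_le_mul_of_nonneg_right ((F l j).measureReal_univ_le (hFnn l j) (hFInf l j))
            (((ih i l).2 x).1.trans ((ih i l).2 x).2)
      _ = (FInf ^ n) i l * FInf l j := mul_comm _ _

lemma convTail_antitone (n : ℕ) (i j : Fin d) : Antitone (convTail F FInf n i j) :=
  fun _ _ hxy => sub_le_sub_left ((iterConv_monotone_and_mem_Icc hFnn hFInf n i j).1 hxy) _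

lemma convTail_mem_Icc (n : ℕ) (i j : Fin d) (x : ℝ) :
    convTail F FInf n i j x ∈ Icc 0 ((FInf ^ n) i j) := by
  obtain ⟨h0, h1⟩ := (iterConv_monotone_and_mem_Icc hFnn hFInf n i j).2 x
  exact ⟨sub_nonneg.2 h1, sub_le_self _ h0⟩

lemma integrable_convTail_comp_sub (n : ℕ) (i j k : Fin d) (x : ℝ) :
    Integrable (fun y => convTail F FInf n i j (x - y)) (F j k).measure :=
  have := (F j k).isFiniteMeasure_measure (hFnn j k) (hFInf j k)
  integrable_comp_sub_of_norm_le (convTail_antitone hFnn hFInf n i j).measurable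
    (fun z => by rw [Real.norm_of_nonneg (convTail_mem_Icc hFnn hFInf n i j z).1]
                 exact (convTail_mem_Icc hFnn hFInf n i j z).2) x

lemma integrable_iterConv_comp_sub (n : ℕ) (i j k : Fin d) (x : ℝ) :
    Integrable (fun y => iterConv F n i j (x - y)) (F j k).measure :=
  have := (F j k).isFiniteMeasure_measure (hFnn j k) (hFInf j k)
  have h := iterConv_monotone_and_mem_Icc hFnn hFInf n i j
  integrable_comp_sub_of_norm_le h.1.measurable
    (fun z => by rw [Real.norm_of_nonneg (h.2 z).1]; exact (h.2 z).2) x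

lemma convTail_succ (n : ℕ) (i k : Fin d) (x : ℝ) :
    convTail F FInf (n + 1) i k x = ∑ j, ((FInf ^ n) i j * (⨅ y, F j k y)
      + ∫ y, convTail F FInf n i j (x - y) ∂(F j k).measure) := by
  have hj : ∀ j, ∫ y, convTail F FInf n i j (x - y) ∂(F j k).measure
      = (FInf ^ n) i j * (FInf j k - ⨅ y, F j k y)
        - ∫ y, iterConv F n i j (x - y) ∂(F j k).measure := by
    intro j
    have := (F j k).isFiniteMeasure_measure (hFnn j k) (hFInf j k)
    rw [← (F j k).measureReal_univ (hFnn j k) (hFInf j k), mul_comm, ← smul_eq_mul,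
      ← integral_const, ← integral_sub (integrable_const _)
        (integrable_iterConv_comp_sub hFnn hFInf n i j k x)]
    rfl
  rw [show convTail F FInf (n + 1) i k x = (FInf ^ (n + 1)) i k
      - ∑ j, ∫ y, iterConv F n i j (x - y) ∂(F j k).measure from rfl,
    pow_succ, Matrix.mul_apply, ← Finset.sum_sub_distrib]
  refine Finset.sum_congr rfl fun j _ => ?_
  rw [hj j]
  ring

end IterConv

section Renewal

variable {d : ℕ} {F : Fin d → Fin d → StieltjesFunction ℝ} {FInf S : Matrix (Fin d) (Fin d) ℝ}
  (hFnn : ∀ i j x, 0 ≤ F i j x) (hFInf : ∀ i j, Tendsto (F i j) atTop (𝓝 (FInf i j)))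
  (hS : ∀ i j, HasSum (fun n => (FInf ^ n) i j) (S i j))
include hFnn hFInf hS

lemma nonneg_of_hasSum_pow (i j : Fin d) : 0 ≤ S i j :=
  (hS i j).nonneg fun n =>
    Matrix.pow_apply_nonneg (fun a b => ge_of_tendsto' (hFInf a b) (hFnn a b)) n i j

lemma summable_convTail (i j : Fin d) (x : ℝ) : Summable fun n => convTail F FInf n i j x :=
  (hS i j).summable.of_nonneg_of_le (fun n => (convTail_mem_Icc hFnn hFInf n i j x).1)
    (fun n => (convTail_mem_Icc hFnn hFInf n i j x).2)

lemma convTailSum_antitone (i j : Fin d) : Antitone (convTailSum F FInf i j) :=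
  fun _ _ hxy => Summable.tsum_le_tsum (fun n => convTail_antitone hFnn hFInf n i j hxy)
    (summable_convTail hFnn hFInf hS i j _) (summable_convTail hFnn hFInf hS i j _)

lemma convTailSum_mem_Icc (i j : Fin d) (x : ℝ) : convTailSum F FInf i j x ∈ Icc 0 (S i j) :=
  ⟨tsum_nonneg fun n => (convTail_mem_Icc hFnn hFInf n i j x).1,
    (hS i j).tsum_eq ▸ Summable.tsum_le_tsum (fun n => (convTail_mem_Icc hFnn hFInf n i j x).2)
      (summable_convTail hFnn hFInf hS i j x) (hS i j).summable⟩

lemma integrable_convTailSum_comp_sub (i j k : Fin d) (x : ℝ) :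
    Integrable (fun y => convTailSum F FInf i j (x - y)) (F j k).measure :=
  have := (F j k).isFiniteMeasure_measure (hFnn j k) (hFInf j k)
  integrable_comp_sub_of_norm_le (convTailSum_antitone hFnn hFInf hS i j).measurable
    (fun z => by rw [Real.norm_of_nonneg (convTailSum_mem_Icc hFnn hFInf hS i j z).1]
                 exact (convTailSum_mem_Icc hFnn hFInf hS i j z).2) x

lemma convTailSum_eq (i k : Fin d) (x : ℝ) :
    convTailSum F FInf i k x = convTail F FInf 0 i k x + ∑ j, (S i j * (⨅ y, F j k y)
      + ∫ y, convTailSum F FInf i j (x - y) ∂(F j k).measure) := by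
  have hint : ∀ j, HasSum (fun n => ∫ y, convTail F FInf n i j (x - y) ∂(F j k).measure)
      (∫ y, convTailSum F FInf i j (x - y) ∂(F j k).measure) := by
    intro j
    have := (F j k).isFiniteMeasure_measure (hFnn j k) (hFInf j k)
    refine hasSum_integral_of_summable_integral_norm
      (fun n => integrable_convTail_comp_sub hFnn hFInf n i j k x) ?_
    refine ((hS i j).summable.mul_left ((F j k).measure.real univ)).of_nonneg_of_le
      (fun n => integral_nonneg fun _ => norm_nonneg _) fun n => ?_
    calc ∫ y, ‖convTail F FInf n i j (x - y)‖ ∂(F j k).measure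
        ≤ ∫ _, (FInf ^ n) i j ∂(F j k).measure :=
          integral_mono (integrable_convTail_comp_sub hFnn hFInf n i j k x).norm
            (integrable_const _) fun y => by
              rw [Real.norm_of_nonneg (convTail_mem_Icc hFnn hFInf n i j _).1]
              exact (convTail_mem_Icc hFnn hFInf n i j _).2
      _ = (F j k).measure.real univ * (FInf ^ n) i j := by rw [integral_const, smul_eq_mul]
  have hsucc : HasSum (fun n => convTail F FInf (n + 1) i k x) (∑ j, (S i j * (⨅ y, F j k y)
      + ∫ y, convTailSum F FInf i j (x - y) ∂(F j k).measure)) := by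
    simp only [convTail_succ hFnn hFInf]
    exact hasSum_sum fun j _ => ((hS i j).mul_right _).add (hint j)
  exact (HasSum.zero_add (f := fun n => convTail F FInf n i k x) hsucc).tsum_eq

end Renewal

section TailBound

variable {d : ℕ} {F : Fin d → Fin d → StieltjesFunction ℝ} {FInf S : Matrix (Fin d) (Fin d) ℝ}
  (hFnn : ∀ i j x, 0 ≤ F i j x) (hFInf : ∀ i j, Tendsto (F i j) atTop (𝓝 (FInf i j)))
  (hS : ∀ i j, HasSum (fun n => (FInf ^ n) i j) (S i j))
include hFnn hFInf hS

lemma integral_convTailSum_comp_sub_le (i j k : Fin d) (x : ℝ) :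
    ∫ y, convTailSum F FInf i j (x - y) ∂(F j k).measure ≤ convTailSum F FInf i k x := by
  have hBnn := nonneg_of_hasSum_pow hFnn hFInf hS i
  have hterm : ∀ q,
      0 ≤ S i q * (⨅ y, F q k y) + ∫ y, convTailSum F FInf i q (x - y) ∂(F q k).measure :=
    fun q => add_nonneg (mul_nonneg (hBnn q) ((F q k).iInf_nonneg (hFnn q k)))
      (integral_nonneg fun y => (convTailSum_mem_Icc hFnn hFInf hS i q _).1)
  rw [convTailSum_eq hFnn hFInf hS]
  calc ∫ y, convTailSum F FInf i j (x - y) ∂(F j k).measure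
      ≤ S i j * (⨅ y, F j k y) + ∫ y, convTailSum F FInf i j (x - y) ∂(F j k).measure :=
        le_add_of_nonneg_left (mul_nonneg (hBnn j) ((F j k).iInf_nonneg (hFnn j k)))
    _ ≤ ∑ q, (S i q * (⨅ y, F q k y) + ∫ y, convTailSum F FInf i q (x - y) ∂(F q k).measure) :=
        Finset.single_le_sum (fun q _ => hterm q) (Finset.mem_univ j)
    _ ≤ _ := le_add_of_nonneg_left (convTail_mem_Icc hFnn hFInf 0 i k x).1

variable {Ω : Type*} [MeasurableSpace Ω] {μ : Measure Ω} [IsProbabilityMeasure μ] {Y : Ω → ℝ}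

lemma sum_mul_iInf_eq_zero_of_isBigO (hY : Measurable Y) {i k : Fin d}
    (hk : convTailSum F FInf i k =O[atTop] tailP μ Y) : ∑ j, S i j * (⨅ y, F j k y) = 0 := by
  have hBnn := nonneg_of_hasSum_pow hFnn hFInf hS i
  refine le_antisymm ?_
    (Finset.sum_nonneg fun j _ => mul_nonneg (hBnn j) ((F j k).iInf_nonneg (hFnn j k)))
  refine ge_of_tendsto (hk.trans_tendsto (tendsto_tailP_atTop hY))
    (Eventually.of_forall fun x => ?_)
  rw [convTailSum_eq hFnn hFInf hS, Finset.sum_add_distrib, ← add_assoc]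
  have := (convTail_mem_Icc hFnn hFInf 0 i k x).1
  have : 0 ≤ ∑ j, ∫ y, convTailSum F FInf i j (x - y) ∂(F j k).measure :=
    Finset.sum_nonneg fun j _ =>
      integral_nonneg fun y => (convTailSum_mem_Icc hFnn hFInf hS i j _).1
  linarith

variable (hYs : SubexpRV μ Y) (hY : Measurable Y) (hY0 : ∀ ω, 0 ≤ Y ω)
include hYs hY hY0

lemma SubexpRV.isBigO_convTailSum_of_measure_ne_zero {i j k : Fin d}
    (hk : convTailSum F FInf i k =O[atTop] tailP μ Y) (hν : (F j k).measure ≠ 0) :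
    convTailSum F FInf i j =O[atTop] tailP μ Y := by
  have := (F j k).isFiniteMeasure_measure (hFnn j k) (hFInf j k)
  have hU := convTailSum_mem_Icc hFnn hFInf hS i j
  obtain ⟨a, ha⟩ : ∃ a, 0 < (F j k).measure (Ici a) :=
    ((tendsto_measure_Ici_atBot _).eventually
      (lt_mem_nhds (pos_iff_ne_zero.2 (mt Measure.measure_univ_eq_zero.1 hν)))).exists
  refine hYs.isBigO_of_le_comp_add hY hY0 (a := a) (ENNReal.toReal_pos ha.ne' (measure_ne_top _ _))
    (fun z => ⟨(hU z).1, ?_⟩) hk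
  have := (mul_measureReal_Ici_le_integral_comp_sub (convTailSum_antitone hFnn hFInf hS i j)
    (fun z => (hU z).1) (integrable_convTailSum_comp_sub hFnn hFInf hS i j k (z + a)) z).trans
    (integral_convTailSum_comp_sub_le hFnn hFInf hS i j k (z + a))
  rw [add_sub_cancel_left, mul_comm] at this
  exact this

lemma SubexpRV.isBigO_tail_of_convTailSum_pos {i j k : Fin d}
    (hk : convTailSum F FInf i k =O[atTop] tailP μ Y) {z₀ : ℝ}
    (hz₀ : 0 < convTailSum F FInf i j z₀) :
    (fun z => FInf j k - F j k z) =O[atTop] tailP μ Y := by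
  have := (F j k).isFiniteMeasure_measure (hFnn j k) (hFInf j k)
  have hU := convTailSum_mem_Icc hFnn hFInf hS i j
  simp only [← (F j k).measureReal_Ioi (hFInf j k)]
  refine hYs.isBigO_of_le_comp_add hY hY0 (a := z₀) hz₀ (fun z => ⟨measureReal_nonneg, ?_⟩) hk
  have := (mul_measureReal_Ici_le_integral_comp_sub (convTailSum_antitone hFnn hFInf hS i j)
    (fun z => (hU z).1) (integrable_convTailSum_comp_sub hFnn hFInf hS i j k (z + z₀)) z₀).trans
    (integral_convTailSum_comp_sub_le hFnn hFInf hS i j k (z + z₀))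
  rw [add_sub_cancel_right] at this
  exact (mul_le_mul_of_nonneg_left (measureReal_mono Ioi_subset_Ici_self) hz₀.le).trans this

variable {Ft : Matrix (Fin d) (Fin d) ℝ} (hFt0 : ∀ i j, 0 ≤ Ft i j)
  (hFlim : ∀ i j, limsup (fun x => (FInf i j - F i j x) / tailP μ Y x) atTop ≤ Ft i j)
include hFt0 hFlim

lemma SubexpRV.eventually_integral_convTailSum_comp_sub_le {i j k : Fin d}
    (hk : convTailSum F FInf i k =O[atTop] tailP μ Y) {δ : ℝ} (hδ : 0 < δ) :
    ∀ᶠ x in atTop, ∫ y, convTailSum F FInf i j (x - y) ∂(F j k).measure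
      ≤ (limsup (fun z => convTailSum F FInf i j z / tailP μ Y z) atTop * FInf j k
        + S i j * Ft j k + δ) * tailP μ Y x := by
  have := (F j k).isFiniteMeasure_measure (hFnn j k) (hFInf j k)
  set U := convTailSum F FInf i j
  set L := limsup (fun z => U z / tailP μ Y z) atTop
  have hT := hYs.tailP_pos hY0
  have hU := convTailSum_mem_Icc hFnn hFInf hS i j
  have hL : 0 ≤ L := limsup_nonneg_of_nonneg fun z => div_nonneg (hU z).1 (hT z).le
  have hRHS : ∀ x, 0 ≤ (L * FInf j k + S i j * Ft j k + δ) * tailP μ Y x := fun x =>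
    mul_nonneg (by have := ge_of_tendsto' (hFInf j k) (hFnn j k)
                   have := nonneg_of_hasSum_pow hFnn hFInf hS i j
                   have := hFt0 j k
                   positivity) (hT x).le
  by_cases hν : (F j k).measure = 0
  · filter_upwards with x
    rw [hν, integral_zero_measure]
    exact hRHS x
  by_cases hpos : ∃ z₀, 0 < U z₀
  swap
  · push Not at hpos
    filter_upwards with x
    have hzero : (fun y => U (x - y)) = 0 := funext fun y => le_antisymm (hpos _) (hU _).1
    rw [hzero, Pi.zero_def, integral_zero]
    exact hRHS x
  obtain ⟨z₀, hz₀⟩ := hpos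
  have hwL : ∀ δ > 0, ∀ᶠ z in atTop, U z ≤ (L + δ) * tailP μ Y z := fun δ hδ =>
    eventually_le_mul_of_limsup_div_le hT ((isBigO_iff_isBoundedUnder_div (fun z => (hU z).1) hT).1
      (hYs.isBigO_convTailSum_of_measure_ne_zero hFnn hFInf hS hY hY0 hk hν)) le_rfl hδ
  have hνC : ∀ δ > 0, ∀ᶠ z in atTop,
      (F j k).measure.real (Ioi z) ≤ (Ft j k + δ) * tailP μ Y z := by
    intro δ hδ
    simp only [(F j k).measureReal_Ioi (hFInf j k)]
    exact eventually_le_mul_of_limsup_div_le hT ((isBigO_iff_isBoundedUnder_div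
      (fun z => sub_nonneg.2 ((F j k).le_of_tendsto_atTop (hFInf j k) z)) hT).1
      (hYs.isBigO_tail_of_convTailSum_pos hFnn hFInf hS hY hY0 hk hz₀)) (hFlim j k) hδ
  filter_upwards [hYs.eventually_integral_comp_sub_le hY hY0
    (convTailSum_antitone hFnn hFInf hS i j) (fun z => (hU z).1) (fun z => (hU z).2) hwL
    (hFt0 j k) hνC hδ] with x hx
  refine hx.trans (mul_le_mul_of_nonneg_right ?_ (hT x).le)
  have := mul_le_mul_of_nonneg_left ((F j k).measureReal_univ_le (hFnn j k) (hFInf j k)) hL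
  linarith

open Matrix in
lemma SubexpRV.limsup_convTailSum_div_le (i k : Fin d) :
    limsup (fun x => convTailSum F FInf i k x / tailP μ Y x) atTop
      ≤ ((fun j => limsup (fun x => convTailSum F FInf i j x / tailP μ Y x) atTop) ᵥ* FInf) k
        + (S * Ft) i k := by
  set l := fun j => limsup (fun x => convTailSum F FInf i j x / tailP μ Y x) atTop
  have hT := hYs.tailP_pos hY0
  have hU := convTailSum_mem_Icc hFnn hFInf hS i
  have hratio : ∀ j x, 0 ≤ convTailSum F FInf i j x / tailP μ Y x :=
    fun j x => div_nonneg (hU j x).1 (hT x).le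
  by_cases hk : convTailSum F FInf i k =O[atTop] tailP μ Y
  swap
  · rw [limsup_eq_zero_of_not_isBoundedUnder
      (mt (isBigO_iff_isBoundedUnder_div (hU k · |>.1) hT).2 hk)]
    simp only [vecMul, dotProduct, mul_apply]
    exact add_nonneg (Finset.sum_nonneg fun j _ => mul_nonneg
        (limsup_nonneg_of_nonneg (l := atTop) (hratio j)) (ge_of_tendsto' (hFInf j k) (hFnn j k)))
      (Finset.sum_nonneg fun j _ => mul_nonneg (nonneg_of_hasSum_pow hFnn hFInf hS i j) (hFt0 j k))
  refine le_of_forall_pos_le_add fun ε hε => ?_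
  have hδ : 0 < ε / (d + 1) := by positivity
  have hdδ : d * (ε / (d + 1)) ≤ ε := by
    rw [mul_div_assoc', div_le_iff₀ (by positivity)]
    nlinarith
  refine limsup_le_of_nonneg_of_eventually_le (hratio k) ?_
  filter_upwards [eventually_all.2 fun j =>
      hYs.eventually_integral_convTailSum_comp_sub_le hFnn hFInf hS hY hY0 hFt0 hFlim (j := j)
        hk hδ,
    eventually_ge_atTop 0] with x hx hx0
  rw [div_le_iff₀ (hT x), convTailSum_eq hFnn hFInf hS, convTail_zero_of_nonneg _ _ _ _ hx0,
    zero_add, Finset.sum_add_distrib, sum_mul_iInf_eq_zero_of_isBigO hFnn hFInf hS hY hk, zero_add]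
  calc ∑ j, ∫ y, convTailSum F FInf i j (x - y) ∂(F j k).measure
      ≤ ∑ j, (l j * FInf j k + S i j * Ft j k + ε / (d + 1)) * tailP μ Y x :=
        Finset.sum_le_sum fun j _ => hx j
    _ = ((l ᵥ* FInf) k + (S * Ft) i k + d * (ε / (d + 1))) * tailP μ Y x := by
        simp only [← Finset.sum_mul, Finset.sum_add_distrib, vecMul, dotProduct, mul_apply,
          Finset.sum_const, Finset.card_univ, Fintype.card_fin, nsmul_eq_mul]
    _ ≤ ((l ᵥ* FInf) k + (S * Ft) i k + ε) * tailP μ Y x := by gcongr; exact (hT x).le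

end TailBound

theorem stmt16_general {Ω : Type*} [MeasurableSpace Ω] (μ : Measure Ω) [IsProbabilityMeasure μ]
    (Y : Ω → ℝ) (hYmeas : Measurable Y) (hY0 : ∀ ω, 0 ≤ Y ω) (hYsub : SubexpRV μ Y)
    {d : ℕ}
    (F : Fin d → Fin d → StieltjesFunction ℝ)
    (hFnn : ∀ i j x, 0 ≤ F i j x)
    (FInf : Matrix (Fin d) (Fin d) ℝ)
    (hFInf : ∀ i j, Tendsto (F i j) atTop (nhds (FInf i j)))
    (Ft : Matrix (Fin d) (Fin d) ℝ)
    (hFlim : ∀ i j,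
      Filter.limsup (fun x => (FInf i j - F i j x) / tailP μ Y x) atTop ≤ Ft i j)
    (hsum : ∀ i j, HasSum (fun n : ℕ => (FInf ^ n) i j) (((1 - FInf)⁻¹ : Matrix (Fin d) (Fin d) ℝ) i j)) :
    ∀ i j, Filter.limsup (fun x =>
        (∑' n : ℕ, ((FInf ^ n) i j - iterConv F n i j x)) / tailP μ Y x) atTop
      ≤ ((1 - FInf)⁻¹ * Ft * (1 - FInf)⁻¹ : Matrix (Fin d) (Fin d) ℝ) i j := by
  intro i k
  have hFt0 : ∀ a b, 0 ≤ Ft a b := fun a b => (limsup_nonneg_of_nonneg fun x => div_nonneg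
    (sub_nonneg.2 ((F a b).le_of_tendsto_atTop (hFInf a b) x)) (tailP_nonneg x)).trans (hFlim a b)
  exact Matrix.le_vecMul_of_le_vecMul_add (fun a b => ge_of_tendsto' (hFInf a b) (hFnn a b))
    (Pi.hasSum.2 fun a => Pi.hasSum.2 (hsum a))
    (hYsub.limsup_convTailSum_div_le hFnn hFInf hsum hYmeas hY0 hFt0 hFlim i) k

/-- If additionally `Σ_{n≥0} (F(∞))^n = (I - F(∞))^{-1} < ∞`, then
`limsup Σ_{n=0}^∞ (F^{*n})‾(x)/P(Y>x) ≤ (I - F(∞))^{-1} F̃ (I - F(∞))^{-1}` entrywise. -/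
theorem stmt16 {Ω : Type*} [MeasurableSpace Ω] (μ : Measure Ω) [IsProbabilityMeasure μ]
    (Y : Ω → ℝ) (hYmeas : Measurable Y) (hY0 : ∀ ω, 0 ≤ Y ω) (hYsub : SubexpRV μ Y)
    {d : ℕ}
    (F : Fin d → Fin d → StieltjesFunction ℝ)
    (hFnn : ∀ i j x, 0 ≤ F i j x)
    (FInf : Matrix (Fin d) (Fin d) ℝ)
    (hFInf : ∀ i j, Tendsto (F i j) atTop (nhds (FInf i j)))
    (Ft : Matrix (Fin d) (Fin d) ℝ) (hFt0 : ∀ i j, 0 ≤ Ft i j)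
    (hFlim : ∀ i j,
      Filter.limsup (fun x => (FInf i j - F i j x) / tailP μ Y x) atTop ≤ Ft i j)
    (hsum : ∀ i j, HasSum (fun n : ℕ => (FInf ^ n) i j) (((1 - FInf)⁻¹ : Matrix (Fin d) (Fin d) ℝ) i j)) :
    ∀ i j, Filter.limsup (fun x =>
        (∑' n : ℕ, ((FInf ^ n) i j - iterConv F n i j x)) / tailP μ Y x) atTop
      ≤ ((1 - FInf)⁻¹ * Ft * (1 - FInf)⁻¹ : Matrix (Fin d) (Fin d) ℝ) i j :=
  stmt16_general μ Y hYmeas hY0 hYsub F hFnn FInf hFInf Ft hFlim hsum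
end
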